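/- arXiv:1905.05885 — 2 statements merged into one kernel-verified Lean document; each statement's English description precedes it below -/
import Mathlib

section
/- Let C be a positive definite symmetric n×n matrix with symmetric square root √C. Let w_1,…,w_λ be real weights and z_1,…,z_λ nonzero vectors in ℝ^n, and set y_i = √C z_i. Suppose c_1, c_μ ≥ 0 and γ ∈ [0,1], and p ∈ ℝ^n. Define C' = (1 − c_1·γ − c_μ·Σ_i w_i) C + c_1 p pᵀ + c_μ Σ_{i: w_i ≥ 0} w_i y_i y_iᵀ + c_μ Σ_{i: w_i < 0} w_i (n/‖z_i‖²) y_i y_iᵀ. If c_1 + c_μ Σ_i w_i + n c_μ Σ_{i: w_i<0} |w_i| < 1, then C' ⪰ (1 − c_1 − c_μ Σ_i w_i − n c_μ Σ_{i: w_i<0} |w_i|) C; in particular C' is positive definite. -/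
open Matrix Finset

lemma psd_smul' {n : ℕ} {M : Matrix (Fin n) (Fin n) ℝ} (hM : M.PosSemidef)
    {a : ℝ} (ha : 0 ≤ a) : (a • M).PosSemidef := by
  refine posSemidef_iff_dotProduct_mulVec.mpr ⟨?_, fun x => ?_⟩
  · unfold Matrix.IsHermitian
    rw [conjTranspose_smul, hM.1.eq]
    simp
  · rw [smul_mulVec, dotProduct_smul, smul_eq_mul]
    exact mul_nonneg ha (hM.dotProduct_mulVec_nonneg x)

lemma pd_smul' {n : ℕ} {M : Matrix (Fin n) (Fin n) ℝ} (hM : M.PosDef)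
    {a : ℝ} (ha : 0 < a) : (a • M).PosDef := by
  refine posDef_iff_dotProduct_mulVec.mpr ⟨?_, fun x hx => ?_⟩
  · unfold Matrix.IsHermitian
    rw [conjTranspose_smul, hM.1.eq]
    simp
  · rw [smul_mulVec, dotProduct_smul, smul_eq_mul]
    exact mul_pos ha (hM.dotProduct_mulVec_pos hx)

lemma vmv_quad {n : ℕ} (v x : Fin n → ℝ) :
    (star x) ⬝ᵥ (vecMulVec v v *ᵥ x) = (v ⬝ᵥ x) ^ 2 := by
  simp [vecMulVec_apply, mulVec, dotProduct, Finset.mul_sum, Finset.sum_mul]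
  rw [sq, Finset.sum_mul_sum]
  exact Finset.sum_congr rfl fun k _ => Finset.sum_congr rfl fun l _ => by ring

lemma psd_vecMulVec' {n : ℕ} (v : Fin n → ℝ) : (vecMulVec v v).PosSemidef := by
  refine posSemidef_iff_dotProduct_mulVec.mpr ⟨?_, fun x => ?_⟩
  · ext i j
    simp [conjTranspose_apply, vecMulVec_apply, mul_comm]
  · rw [vmv_quad]; positivity

lemma psd_sum' {n : ℕ} {ι : Type*} [DecidableEq ι] (s : Finset ι)
    (f : ι → Matrix (Fin n) (Fin n) ℝ)
    (hf : ∀ i ∈ s, (f i).PosSemidef) : (∑ i ∈ s, f i).PosSemidef := by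
  induction s using Finset.induction_on with
  | empty => simpa using Matrix.PosSemidef.zero
  | insert _ _ h ih =>
    rw [Finset.sum_insert h]
    exact (hf _ (Finset.mem_insert_self _ _)).add
      (ih fun i hi => hf i (Finset.mem_insert_of_mem hi))

lemma vmv_mulVec {n : ℕ} (A : Matrix (Fin n) (Fin n) ℝ) (z : Fin n → ℝ) :
    vecMulVec (A *ᵥ z) (A *ᵥ z) = A * vecMulVec z z * Aᵀ := by
  ext i j
  simp [vecMulVec_apply, mul_apply, mulVec, dotProduct, Finset.sum_mul, Finset.mul_sum,
    transpose_apply]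
  exact Finset.sum_congr rfl fun k _ => Finset.sum_congr rfl fun l _ => by ring

lemma psd_scaled_id_sub {n : ℕ} (z : Fin n → ℝ) (hz : z ≠ 0) :
    ((n : ℝ) • (1 : Matrix (Fin n) (Fin n) ℝ)
      - ((n : ℝ) / ∑ k, z k ^ 2) • vecMulVec z z).PosSemidef := by
  have hS : 0 < ∑ k, z k ^ 2 := by
    obtain ⟨k, hk⟩ : ∃ k, z k ≠ 0 := by
      by_contra h
      push_neg at h
      exact hz (funext h)
    exact Finset.sum_pos' (fun i _ => sq_nonneg _) ⟨k, Finset.mem_univ _, by positivity⟩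
  refine posSemidef_iff_dotProduct_mulVec.mpr ⟨?_, fun x => ?_⟩
  · have h1 := (psd_vecMulVec' z).1
    unfold Matrix.IsHermitian at h1 ⊢
    rw [conjTranspose_sub, conjTranspose_smul, conjTranspose_smul, conjTranspose_one, h1]
    simp
  · rw [sub_mulVec, dotProduct_sub, smul_mulVec, smul_mulVec, one_mulVec,
      dotProduct_smul, dotProduct_smul, smul_eq_mul, smul_eq_mul, vmv_quad]
    have hcs : (z ⬝ᵥ x) ^ 2 ≤ (∑ k, z k ^ 2) * ∑ k, x k ^ 2 := by
      simpa [dotProduct] using Finset.sum_mul_sq_le_sq_mul_sq Finset.univ z x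
    have hxx : (star x) ⬝ᵥ x = ∑ k, x k ^ 2 := by
      simp [dotProduct, sq]
    rw [hxx]
    have h1 : ((n : ℝ) / ∑ k, z k ^ 2) * (z ⬝ᵥ x) ^ 2
        ≤ ((n : ℝ) / ∑ k, z k ^ 2) * ((∑ k, z k ^ 2) * ∑ k, x k ^ 2) := by
      apply mul_le_mul_of_nonneg_left hcs
      positivity
    have h2 : ((n : ℝ) / ∑ k, z k ^ 2) * ((∑ k, z k ^ 2) * ∑ k, x k ^ 2)
        = (n : ℝ) * ∑ k, x k ^ 2 := by
      field_simp
    linarith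

/-- Theorem 1 (positive definiteness of the active CMA covariance update with
rescaled negative steps, case `t_eig = 1`). -/
theorem stmt2 {n L : ℕ} (C sqrtC : Matrix (Fin n) (Fin n) ℝ)
    (hC : C.PosDef) (hsqrt : sqrtC.IsHermitian) (hsq : sqrtC * sqrtC = C)
    (w : Fin L → ℝ) (z : Fin L → (Fin n → ℝ)) (hz : ∀ i, z i ≠ 0)
    (y : Fin L → (Fin n → ℝ)) (hy : ∀ i, y i = sqrtC *ᵥ z i)
    (c1 cμ : ℝ) (hc1 : 0 ≤ c1) (hcμ : 0 ≤ cμ)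
    (γ : ℝ) (hγ : γ ∈ Set.Icc (0:ℝ) 1) (p : Fin n → ℝ)
    (C' : Matrix (Fin n) (Fin n) ℝ)
    (hC' : C' = (1 - c1 * γ - cμ * ∑ i, w i) • C + c1 • vecMulVec p p
      + cμ • ∑ i ∈ univ.filter (fun i => 0 ≤ w i), w i • vecMulVec (y i) (y i)
      + cμ • ∑ i ∈ univ.filter (fun i => w i < 0),
          (w i * ((n : ℝ) / ∑ k, z i k ^ 2)) • vecMulVec (y i) (y i))
    (hsum : c1 + cμ * ∑ i, w i
        + n * cμ * ∑ i ∈ univ.filter (fun i => w i < 0), |w i| < 1) :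
    (C' - (1 - c1 - cμ * ∑ i, w i
        - n * cμ * ∑ i ∈ univ.filter (fun i => w i < 0), |w i|) • C).PosSemidef ∧
    C'.PosDef := by
  have hT : sqrtCᵀ = sqrtC := by
    ext i j
    have := congrFun (congrFun hsqrt.eq i) j
    simpa [conjTranspose_apply] using this
  -- matrix identity for the rescaled negative terms
  have hMdef : ∀ i : Fin L,
      (n : ℝ) • C - ((n : ℝ) / ∑ k, z i k ^ 2) • vecMulVec (y i) (y i)
        = sqrtC * ((n : ℝ) • (1 : Matrix (Fin n) (Fin n) ℝ)
            - ((n : ℝ) / ∑ k, z i k ^ 2) • vecMulVec (z i) (z i)) * sqrtCᴴ := by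
    intro i
    have hCT : sqrtCᴴ = sqrtC := hsqrt.eq
    rw [hCT, Matrix.mul_sub, Matrix.sub_mul, hy i, vmv_mulVec, hT]
    rw [Matrix.mul_smul, Matrix.smul_mul, Matrix.mul_one, hsq,
      Matrix.mul_smul, Matrix.smul_mul]
  have hMpsd : ∀ i : Fin L,
      ((n : ℝ) • C - ((n : ℝ) / ∑ k, z i k ^ 2) • vecMulVec (y i) (y i)).PosSemidef := by
    intro i
    rw [hMdef i]
    exact (psd_scaled_id_sub (z i) (hz i)).mul_mul_conjTranspose_same sqrtC
  set α : ℝ := 1 - c1 - cμ * ∑ i, w i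
      - n * cμ * ∑ i ∈ univ.filter (fun i => w i < 0), |w i| with hα
  have hαpos : 0 < α := by rw [hα]; linarith
  -- decomposition of C' - α • C into PSD pieces
  have key : C' - α • C =
      (c1 * (1 - γ)) • C + c1 • vecMulVec p p
      + ∑ i ∈ univ.filter (fun i => 0 ≤ w i), (cμ * w i) • vecMulVec (y i) (y i)
      + ∑ i ∈ univ.filter (fun i => w i < 0),
          (cμ * |w i|) • ((n : ℝ) • C
            - ((n : ℝ) / ∑ k, z i k ^ 2) • vecMulVec (y i) (y i)) := by
    subst hC'
    ext a b
    simp only [Matrix.sub_apply, Matrix.add_apply, Matrix.smul_apply, Matrix.sum_apply,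
      vecMulVec_apply, smul_eq_mul, hα]
    have e1 : ∑ k ∈ univ.filter (fun i => w i < 0),
        (cμ * |w k|) * ((n : ℝ) * C a b
          - ((n : ℝ) / ∑ j, z k j ^ 2) * (y k a * y k b))
        = (cμ * (n : ℝ) * C a b) * (∑ k ∈ univ.filter (fun i => w i < 0), |w k|)
          + cμ * ∑ k ∈ univ.filter (fun i => w i < 0),
              (w k * ((n : ℝ) / ∑ j, z k j ^ 2)) * (y k a * y k b) := by
      rw [Finset.mul_sum, Finset.mul_sum, ← Finset.sum_add_distrib]
      refine Finset.sum_congr rfl fun k hk => ?_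
      have hk' : w k < 0 := (Finset.mem_filter.mp hk).2
      rw [abs_of_neg hk']
      ring
    rw [e1]
    set t1 := ∑ k ∈ univ.filter (fun i => w i < 0),
        (w k * ((n : ℝ) / ∑ j, z k j ^ 2)) * (y k a * y k b) with ht1
    set t2 := ∑ k ∈ univ.filter (fun i => 0 ≤ w i), w k * (y k a * y k b) with ht2
    set t3 := ∑ k ∈ univ.filter (fun i => w i < 0), |w k| with ht3
    have e5 : ∑ k ∈ univ.filter (fun i => 0 ≤ w i), (cμ * w k) * (y k a * y k b)
        = cμ * t2 := by
      rw [ht2, Finset.mul_sum]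
      exact Finset.sum_congr rfl fun k _ => by ring
    rw [e5]
    ring
  have hD : (C' - α • C).PosSemidef := by
    rw [key]
    refine (((psd_smul' hC.posSemidef (mul_nonneg hc1 (by linarith [hγ.2]))).add
        (psd_smul' (psd_vecMulVec' p) hc1)).add
        (psd_sum' _ _ fun i hi => psd_smul' (psd_vecMulVec' (y i))
          (mul_nonneg hcμ (Finset.mem_filter.mp hi).2))).add
      (psd_sum' _ _ fun i _ => psd_smul' (hMpsd i) (mul_nonneg hcμ (abs_nonneg _)))
  refine ⟨hD, ?_⟩
  have hC'eq : C' = (C' - α • C) + α • C := (sub_add_cancel C' (α • C)).symm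
  rw [hC'eq]
  exact Matrix.PosDef.posSemidef_add hD (pd_smul' hC hαpos)
end

section
/- For any symmetric positive definite n×n matrix A and any symmetric n×n matrix B, Tr(A B A^{-1} B) ≤ Cond(A) · Tr(B²), where Cond(A) = d_1(A)/d_n(A) is the ratio of the largest to the smallest eigenvalue of A. -/
/-! Diagonalize `A = U D Uᵀ` with `U` orthogonal and put `C = Uᵀ B U`, again symmetric. Conjugation
by `U` preserves traces, so `Tr(A B A⁻¹ B) = ∑ᵢⱼ (dᵢ / dⱼ) Cᵢⱼ²` and `Tr(B²) = ∑ᵢⱼ Cᵢⱼ²`, and every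
ratio `dᵢ / dⱼ` is at most `Cond(A)`. -/

open Matrix Unitary

namespace Matrix

variable {n R : Type*} [Fintype n] [DecidableEq n]

section Conjugation

variable [CommRing R] [StarRing R] (u : unitary (Matrix n n R))

theorem trace_conjStarAlgAut (X : Matrix n n R) :
    (conjStarAlgAut R _ u X).trace = X.trace := by
  rw [conjStarAlgAut_apply, trace_mul_cycle, coe_star_mul_self, one_mul]

theorem conjStarAlgAut_nonsing_inv {X Y : Matrix n n R} (h : Y * X = 1) :
    (conjStarAlgAut R _ u X)⁻¹ = conjStarAlgAut R _ u Y :=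
  inv_eq_left_inv <| by rw [← map_mul, h, map_one]

end Conjugation

theorem trace_diagonal_mul_mul_diagonal_mul_le [CommRing R] [LinearOrder R]
    [IsStrictOrderedRing R] {C : Matrix n n R} (hC : C.IsSymm) {a b : n → R} {κ : R}
    (hab : ∀ i j, a i * b j ≤ κ) :
    (diagonal a * C * diagonal b * C).trace ≤ κ * (C * C).trace := by
  simp_rw [trace, diag_apply, mul_apply (M := diagonal a * C * diagonal b), mul_diagonal,
    diagonal_mul, mul_apply, Finset.mul_sum]
  refine Finset.sum_le_sum fun i _ => Finset.sum_le_sum fun j _ => ?_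
  rw [hC.apply i j]
  calc a i * C i j * b j * C i j = (a i * b j) * (C i j * C i j) := by ring
    _ ≤ κ * (C i j * C i j) := mul_le_mul_of_nonneg_right (hab i j) (mul_self_nonneg _)

end Matrix

theorem div_le_ciSup_div_ciInf {ι : Type*} [Finite ι] {f : ι → ℝ} (hf : ∀ i, 0 < f i)
    (i j : ι) : f i / f j ≤ (⨆ k, f k) / (⨅ k, f k) := by
  have hinf : 0 < ⨅ k, f k := by
    have : Nonempty ι := ⟨i⟩
    obtain ⟨k, hk⟩ := Finite.exists_min f
    exact (hf k).trans_le (le_ciInf hk)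
  exact div_le_div₀ ((hf i).le.trans (le_ciSup (Set.finite_range f).bddAbove i))
    (le_ciSup (Set.finite_range f).bddAbove i) hinf (ciInf_le (Set.finite_range f).bddBelow j)

/-- For `A` symmetric positive definite and `B` symmetric,
`Tr(A B A⁻¹ B) ≤ Cond(A) · Tr(B²)` where `Cond(A) = d₁(A)/dₙ(A)`. -/
theorem stmt7 {n : ℕ} (A B : Matrix (Fin n) (Fin n) ℝ)
    (hA : A.PosDef) (hB : B.IsHermitian) :
    (A * B * A⁻¹ * B).trace
      ≤ ((⨆ i, hA.1.eigenvalues i) / (⨅ i, hA.1.eigenvalues i)) * (B * B).trace := by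
  set d := hA.1.eigenvalues
  set U := hA.1.eigenvectorUnitary
  set φ := conjStarAlgAut ℝ _ U
  set C := φ.symm B
  have hAd : A = φ (diagonal d) := hA.1.spectral_theorem.trans (by simp [φ, d, U])
  have hBC : B = φ C := (φ.apply_symm_apply B).symm
  have hAinv : A⁻¹ = φ (diagonal d⁻¹) := by
    rw [hAd]
    refine conjStarAlgAut_nonsing_inv U ?_
    rw [diagonal_mul_diagonal, ← diagonal_one]
    exact congrArg diagonal (funext fun i => inv_mul_cancel₀ (hA.eigenvalues_pos i).ne')
  have hC : C.IsSymm :=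
    isHermitian_iff_isSymm.mp <| (map_star φ.symm B).symm.trans (congrArg φ.symm hB)
  calc (A * B * A⁻¹ * B).trace = (diagonal d * C * diagonal d⁻¹ * C).trace := by
        rw [hAinv, hAd, hBC, ← map_mul, ← map_mul, ← map_mul, trace_conjStarAlgAut]
    _ ≤ ((⨆ i, d i) / (⨅ i, d i)) * (C * C).trace :=
        trace_diagonal_mul_mul_diagonal_mul_le hC fun i j =>
          div_le_ciSup_div_ciInf hA.eigenvalues_pos i j
    _ = _ := by rw [← trace_conjStarAlgAut U (C * C), map_mul, ← hBC]
end
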